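/- In the Hopf algebra QSym of quasisymmetric functions, the antipode acts on the fundamental basis by S(F_α) = (-1)^{|α|} F_{α^t}, where α^t is the conjugate (transpose) of the composition α. -/

import Mathlib

open TensorProduct

/-- The multiset of all shuffles (interleavings) of two words. -/
def shuffles {α : Type*} : List α → List α → Multiset (List α)
  | [], w => {w}
  | a :: v, [] => {a :: v}
  | a :: v, b :: w =>
      ((shuffles v (b :: w)).map (a :: ·)) + ((shuffles (a :: v) w).map (b :: ·))
  termination_by v w => v.length + w.length
  decreasing_by all_goals (simp; try omega)

/-- The descent composition of a word of distinct letters: the composition of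
`w.length` recording the maximal increasing runs, i.e. corresponding to the
descent set `{i : w_i > w_{i+1}}`. -/
def descComp : List ℕ → List ℕ
  | [] => []
  | [_] => [1]
  | a :: b :: t =>
      if b < a then 1 :: descComp (b :: t)
      else
        match descComp (b :: t) with
        | [] => [1]
        | c :: r => (c + 1) :: r

/-- Splitting a composition `α` of `n` at position `i` (with `0 ≤ i ≤ n`) along
the ribbon diagram: the first `i` cells form the first composition and the
remaining cells the second (a part through which the cut passes is divided in
two). -/
def splitComp : List ℕ → ℕ → List ℕ × List ℕ
  | [], _ => ([], [])
  | a :: t, i =>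
      if i = 0 then ([], a :: t)
      else if i < a then ([i], (a - i) :: t)
      else
        let p := splitComp t (i - a)
        (a :: p.1, p.2)

/-- The list of partial sums of a composition. -/
def psums : List ℕ → List ℕ
  | [] => []
  | a :: t => a :: (psums t).map (a + ·)

/-- The descent set of a composition `α ⊨ n`: the set of proper partial sums,
a subset of `{1, …, n-1}`. -/
def Dset (α : List ℕ) : Finset ℕ := (psums α).dropLast.toFinset

/-- Successive differences, used to reconstruct a composition from its descent
set. -/
def diffs : ℕ → List ℕ → ℕ → List ℕ
  | prev, [], n => [n - prev]
  | prev, x :: xs, n => (x - prev) :: diffs x xs n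

/-- The composition of `n` with descent set `S ⊆ {1, …, n-1}`. -/
def compOfSet (n : ℕ) (S : Finset ℕ) : List ℕ :=
  if n = 0 then [] else diffs 0 (S.sort (· ≤ ·)) n

/-- The conjugate (transpose) of a composition `α ⊨ n`: under the bijection
with subsets of `{1, …, n-1}` it corresponds to the complement of the reverse
of the descent set of `α`. -/
def conj (α : List ℕ) : List ℕ :=
  compOfSet α.sum
    ((Finset.Ioo 0 α.sum).filter (fun i => α.sum - i ∉ Dset α))


/-!
Every composition `α` is the descent composition of a word of distinct letters, and on such words
the structure maps of the fundamental basis become operations on words: the coproduct of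
`F (descComp u)` deconcatenates `u`, products shuffle, and conjugation of the descent
composition is reversal of the word. Takeuchi's relation
`∑ᵢ S(F_{u₁…uᵢ}) F_{uᵢ₊₁…uₙ} = ε(F_u) = 0` and induction on the length reduce
`S(F_u) = (-1)^n F_{reverse u}` to the vanishing of the alternating sum
`∑ᵢ (-1)^i (uᵢ…u₁) ⧢ (uᵢ₊₁…uₙ)`. That sum telescopes: the shuffles of the `i`-th term that
begin with `uᵢ₊₁` are exactly those of the `(i+1)`-st term that begin with `uᵢ₊₁`.
-/

def extendRun : List ℕ → List ℕ
  | [] => [1]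
  | c :: r => (c + 1) :: r

lemma descComp_cons_of_lt {a b : ℕ} (t : List ℕ) (h : b < a) :
    descComp (a :: b :: t) = 1 :: descComp (b :: t) := by
  simp [descComp, h]

lemma descComp_cons_of_forall_le {a : ℕ} {u : List ℕ} (h : ∀ b ∈ u.head?, a ≤ b) :
    descComp (a :: u) = extendRun (descComp u) := by
  match u, h with
  | [], _ => rfl
  | b :: t, h =>
    have hab : ¬ b < a := by simpa using h
    simp only [descComp, hab, if_false]
    split <;> simp_all [extendRun]

lemma sum_extendRun (β : List ℕ) : (extendRun β).sum = β.sum + 1 := by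
  cases β <;> simp [extendRun]; omega

lemma pos_of_mem_extendRun {β : List ℕ} (hβ : ∀ p ∈ β, 0 < p) : ∀ p ∈ extendRun β, 0 < p := by
  cases β <;> simp_all [extendRun]

lemma sum_descComp : ∀ u : List ℕ, (descComp u).sum = u.length
  | [] => rfl
  | [_] => rfl
  | a :: b :: t => by
    by_cases h : b < a
    · simp [descComp_cons_of_lt t h, sum_descComp (b :: t)]; omega
    · rw [descComp_cons_of_forall_le (by simpa using h), sum_extendRun, sum_descComp (b :: t)]
      simp

lemma pos_of_mem_descComp : ∀ u : List ℕ, ∀ p ∈ descComp u, 0 < p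
  | [] => by simp [descComp]
  | [_] => by simp [descComp]
  | a :: b :: t => by
    by_cases h : b < a
    · simpa [descComp_cons_of_lt t h] using pos_of_mem_descComp (b :: t)
    · rw [descComp_cons_of_forall_le (by simpa using h)]
      exact pos_of_mem_extendRun (pos_of_mem_descComp (b :: t))

lemma descComp_ne_nil {u : List ℕ} (hu : u ≠ []) : descComp u ≠ [] := by
  intro h
  simpa [h, eq_comm, hu] using sum_descComp u

lemma splitComp_zero (β : List ℕ) : splitComp β 0 = ([], β) := by
  cases β <;> simp [splitComp]

lemma splitComp_one_cons_succ (β : List ℕ) (j : ℕ) :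
    splitComp (1 :: β) (j + 1) = (1 :: (splitComp β j).1, (splitComp β j).2) := by
  simp [splitComp]

lemma splitComp_extendRun_succ {β : List ℕ} (hβ : ∀ p ∈ β, 0 < p) (j : ℕ) :
    splitComp (extendRun β) (j + 1) = (extendRun (splitComp β j).1, (splitComp β j).2) := by
  match β with
  | [] => simp [splitComp, extendRun]
  | c :: r =>
    have hc : 0 < c := hβ c (by simp)
    rcases j with _ | j
    · simp [splitComp, extendRun, hc]
    · by_cases hj : j + 1 < c <;> simp [splitComp, extendRun, hj]

lemma splitComp_descComp : ∀ (u : List ℕ) (i : ℕ),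
    splitComp (descComp u) i = (descComp (u.take i), descComp (u.drop i))
  | [], i => by simp [descComp, splitComp]
  | a :: u, 0 => by simp [splitComp_zero, descComp]
  | a :: u, j + 1 => by
    rw [List.take_succ_cons, List.drop_succ_cons]
    by_cases h : ∃ b ∈ u.head?, b < a
    · obtain ⟨b, t, rfl, hb⟩ : ∃ b t, u = b :: t ∧ b < a := by
        obtain ⟨b, hb, hba⟩ := h
        cases u <;> simp_all
      rw [descComp_cons_of_lt t hb, splitComp_one_cons_succ, splitComp_descComp]
      rcases j with _ | j
      · simp [descComp]
      · simp [descComp_cons_of_lt _ hb]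
    · push Not at h
      rw [descComp_cons_of_forall_le h, splitComp_extendRun_succ (pos_of_mem_descComp u),
        splitComp_descComp, descComp_cons_of_forall_le]
      intro b hb
      rw [List.head?_take] at hb
      split_ifs at hb
      · simp at hb
      · exact h b hb

-- The parts of `α` become runs of consecutive integers, each run lying above the next one.
def modelWord : List ℕ → List ℕ
  | [] => []
  | a :: t => List.range' t.sum a ++ modelWord t

lemma lt_sum_of_mem_modelWord : ∀ {α : List ℕ} {x : ℕ}, x ∈ modelWord α → x < α.sum
  | a :: t, x, hx => by
    simp only [modelWord, List.mem_append, List.mem_range'] at hx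
    rcases hx with ⟨i, hi, rfl⟩ | hx
    · simp; omega
    · have := lt_sum_of_mem_modelWord hx; simp; omega

lemma nodup_modelWord : ∀ α : List ℕ, (modelWord α).Nodup
  | [] => List.nodup_nil
  | a :: t => by
    refine List.nodup_append.2 ⟨List.nodup_range', nodup_modelWord t, ?_⟩
    rintro x hx y hy rfl
    have := lt_sum_of_mem_modelWord hy
    simp [List.mem_range'] at hx
    omega

lemma descComp_range'_append : ∀ {a : ℕ} (s : ℕ) {u : List ℕ}, 0 < a →
    (∀ b ∈ u.head?, b < s) → descComp (List.range' s a ++ u) = a :: descComp u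
  | 1, s, [], _, _ => rfl
  | 1, s, b :: t, _, hu => descComp_cons_of_lt t (hu b rfl)
  | a + 2, s, u, _, hu => by
    have ih := descComp_range'_append (a := a + 1) (s + 1) (u := u) (by omega)
      (fun b hb => by have := hu b hb; omega)
    rw [List.range'_succ, List.cons_append, descComp_cons_of_forall_le, ih]
    · rfl
    · intro b hb
      rw [List.range'_succ] at hb
      simp at hb
      omega

lemma descComp_modelWord : ∀ {α : List ℕ}, (∀ p ∈ α, 0 < p) → descComp (modelWord α) = α
  | [], _ => rfl
  | a :: t, hα => by
    rw [modelWord, descComp_range'_append _ (hα a (by simp)), descComp_modelWord]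
    · exact fun p hp => hα p (by simp [hp])
    · exact fun b hb => lt_sum_of_mem_modelWord (List.mem_of_mem_head? hb)

lemma psums_ne_nil {β : List ℕ} (h : β ≠ []) : psums β ≠ [] := by
  cases β <;> simp_all [psums]

lemma pos_of_mem_psums : ∀ {α : List ℕ}, (∀ p ∈ α, 0 < p) → ∀ p ∈ psums α, 0 < p
  | a :: t, h, p, hp => by
    have ha := h a (by simp)
    simp only [psums, List.mem_cons, List.mem_map] at hp
    omega

lemma pairwise_lt_psums : ∀ {α : List ℕ}, (∀ p ∈ α, 0 < p) → (psums α).Pairwise (· < ·)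
  | [], _ => List.Pairwise.nil
  | a :: t, h => by
    have ht : ∀ p ∈ t, 0 < p := fun p hp => h p (by simp [hp])
    refine List.pairwise_cons.2 ⟨?_, List.pairwise_map.2 ((pairwise_lt_psums ht).imp ?_)⟩
    · intro y hy
      obtain ⟨z, hz, rfl⟩ := List.mem_map.1 hy
      have := pos_of_mem_psums ht z hz
      omega
    · intro x y hxy
      omega

lemma dropLast_psums_cons {β : List ℕ} (a : ℕ) (h : β ≠ []) :
    (psums (a :: β)).dropLast = a :: (psums β).dropLast.map (a + ·) := by
  rw [psums, List.dropLast_cons_of_ne_nil (by simpa using psums_ne_nil h), List.map_dropLast]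

lemma psums_succ_cons (c : ℕ) (r : List ℕ) :
    psums ((c + 1) :: r) = (psums (c :: r)).map (1 + ·) := by
  simp only [psums, List.map_cons, List.map_map, Function.comp_def]
  congr 1
  · omega
  · congr 1
    funext x
    omega

lemma mem_Dset_descComp_cons_cons {a b j : ℕ} {t : List ℕ} :
    j ∈ Dset (descComp (a :: b :: t)) ↔
      (j = 1 ∧ b < a) ∨ ∃ j' ∈ Dset (descComp (b :: t)), 1 + j' = j := by
  by_cases h : b < a
  · rw [descComp_cons_of_lt t h, Dset, dropLast_psums_cons _ (descComp_ne_nil (by simp))]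
    simp [Dset, h, -List.map_dropLast]
  · obtain ⟨c, r, hcr⟩ := List.exists_cons_of_ne_nil (descComp_ne_nil (List.cons_ne_nil b t))
    rw [descComp_cons_of_forall_le (by simpa using h), hcr, extendRun, Dset, Dset,
      psums_succ_cons, ← List.map_dropLast]
    simp [h, -List.map_dropLast]

lemma mem_Dset_descComp_iff : ∀ {u : List ℕ} {j : ℕ},
    j ∈ Dset (descComp u) ↔ 0 < j ∧ ∃ h : j < u.length, u[j] < u[j - 1]
  | [], j => by simp [Dset, descComp, psums]
  | [a], j => by simp [Dset, descComp, psums]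
  | a :: b :: t, j => by
    rw [mem_Dset_descComp_cons_cons]
    constructor
    · rintro (⟨rfl, hba⟩ | ⟨j', hj', rfl⟩)
      · exact ⟨one_pos, by simp, hba⟩
      · obtain ⟨hj'0, hj'len, hlt⟩ := mem_Dset_descComp_iff.1 hj'
        obtain ⟨k, rfl⟩ : ∃ k, j' = k + 1 := ⟨j' - 1, by omega⟩
        refine ⟨by omega, by simp at hj'len ⊢; omega, ?_⟩
        simpa [Nat.add_comm 1] using hlt
    · rintro ⟨hj0, hjlen, hlt⟩
      obtain rfl | ⟨j', rfl⟩ : j = 1 ∨ ∃ j', j = j' + 2 := by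
        rcases j with _ | _ | j' <;> simp_all
      · exact Or.inl ⟨rfl, by simpa using hlt⟩
      · simp only [List.length_cons] at hjlen
        refine Or.inr ⟨j' + 1, mem_Dset_descComp_iff.2 ⟨by omega, by simp; omega, ?_⟩, by omega⟩
        simpa using hlt

lemma Dset_descComp_reverse {u : List ℕ} (hu : u.Nodup) :
    Dset (descComp u.reverse) =
      (Finset.Ioo 0 u.length).filter (fun i => u.length - i ∉ Dset (descComp u)) := by
  ext j
  simp only [Finset.mem_filter, Finset.mem_Ioo, mem_Dset_descComp_iff, List.length_reverse,
    List.getElem_reverse, not_and, not_exists, not_lt]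
  by_cases hj : 0 < j ∧ j < u.length
  swap
  · exact ⟨fun ⟨h0, hn, _⟩ => absurd ⟨h0, hn⟩ hj, fun ⟨h, _⟩ => absurd h hj⟩
  have e1 : u.length - 1 - (j - 1) = u.length - j := by omega
  have e2 : u.length - 1 - j = u.length - j - 1 := by omega
  simp only [e1, e2, hj, true_and, exists_true_left]
  constructor
  · exact fun hlt _ _ => hlt.le
  · intro hle
    refine lt_of_le_of_ne (hle (by omega) (by omega)) ?_
    rw [Ne, hu.getElem_inj_iff]
    omega

lemma diffs_map_add : ∀ (L : List ℕ) (p m a : ℕ),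
    diffs (a + p) (L.map (a + ·)) (a + m) = diffs p L m
  | [], p, m, a => by simp [diffs]; omega
  | x :: xs, p, m, a => by
    simp only [List.map_cons, diffs, diffs_map_add xs x m a]
    congr 1
    omega

lemma diffs_dropLast_psums : ∀ {α : List ℕ}, α ≠ [] →
    diffs 0 (psums α).dropLast α.sum = α
  | [a], _ => by simp [psums, diffs]
  | a :: b :: t, _ => by
    have := diffs_map_add (psums (b :: t)).dropLast 0 (b :: t).sum a
    rw [Nat.add_zero] at this
    rw [dropLast_psums_cons a (List.cons_ne_nil b t), List.sum_cons, diffs, this,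
      diffs_dropLast_psums (List.cons_ne_nil b t), Nat.sub_zero]

lemma compOfSet_sum_Dset {β : List ℕ} (hβ : ∀ p ∈ β, 0 < p) :
    compOfSet β.sum (Dset β) = β := by
  rcases eq_or_ne β [] with rfl | hne
  · simp [compOfSet]
  have hsum : β.sum ≠ 0 := by
    obtain ⟨b, t, rfl⟩ := List.exists_cons_of_ne_nil hne
    have := hβ b (by simp)
    simp only [List.sum_cons]
    omega
  have hlt : (psums β).dropLast.Pairwise (· < ·) :=
    (pairwise_lt_psums hβ).sublist (List.dropLast_sublist _)
  have hsort : (Dset β).sort (· ≤ ·) = (psums β).dropLast :=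
    (List.toFinset_sort (· ≤ ·) (hlt.imp ne_of_lt)).2 (hlt.imp le_of_lt)
  rw [compOfSet, if_neg hsum, hsort, diffs_dropLast_psums hne]

lemma conj_descComp {u : List ℕ} (hu : u.Nodup) : conj (descComp u) = descComp u.reverse := by
  rw [conj, sum_descComp, ← Dset_descComp_reverse hu,
    show u.length = (descComp u.reverse).sum by simp [sum_descComp]]
  exact compOfSet_sum_Dset (pos_of_mem_descComp _)

section Shuffles

variable {β : Type*}

def shufflesHeadLeft : List β → List β → Multiset (List β)
  | [], _ => 0
  | a :: v, w => (shuffles v w).map (a :: ·)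

def shufflesHeadRight : List β → List β → Multiset (List β)
  | _, [] => 0
  | v, b :: w => (shuffles v w).map (b :: ·)

lemma shuffles_eq_headLeft_add_headRight {v w : List β} (h : v ≠ [] ∨ w ≠ []) :
    shuffles v w = shufflesHeadLeft v w + shufflesHeadRight v w := by
  match v, w, h with
  | [], b :: w, _ => simp [shuffles, shufflesHeadLeft, shufflesHeadRight]
  | a :: v, [], _ =>
    cases v <;> simp [shuffles, shufflesHeadLeft, shufflesHeadRight]
  | a :: v, b :: w, _ => simp [shuffles, shufflesHeadLeft, shufflesHeadRight]

lemma shufflesHeadLeft_cons (b : β) (v w : List β) :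
    shufflesHeadLeft (b :: v) w = shufflesHeadRight v (b :: w) := rfl

end Shuffles

lemma sum_range_succ_neg_one_pow_smul_add_eq_zero {M : Type*} [AddCommGroup M] (x y : ℕ → M)
    {n : ℕ} (hx : x 0 = 0) (hy : y n = 0) (hxy : ∀ i < n, x (i + 1) = y i) :
    ∑ i ∈ Finset.range (n + 1), (-1 : ℤ) ^ i • (x i + y i) = 0 := by
  have hx' : ∑ i ∈ Finset.range (n + 1), (-1 : ℤ) ^ i • x i
      = -∑ i ∈ Finset.range n, (-1 : ℤ) ^ i • y i := by
    rw [Finset.sum_range_succ', hx, smul_zero, add_zero, ← Finset.sum_neg_distrib]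
    refine Finset.sum_congr rfl fun i hi => ?_
    rw [hxy i (Finset.mem_range.1 hi), pow_succ, mul_neg_one, neg_smul]
  rw [Finset.sum_congr rfl fun i _ => smul_add _ _ _, Finset.sum_add_distrib, hx',
    Finset.sum_range_succ, hy, smul_zero, add_zero, neg_add_cancel]

lemma sum_range_neg_one_pow_smul_shuffles_reverse_take_drop_eq_zero {β M : Type*}
    [AddCommGroup M] (g : List β → M) {w : List β} (hw : w ≠ []) :
    ∑ i ∈ Finset.range (w.length + 1),
      (-1 : ℤ) ^ i • ((shuffles (w.take i).reverse (w.drop i)).map g).sum = 0 := by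
  have hsplit : ∀ i ∈ Finset.range (w.length + 1),
      (shuffles (w.take i).reverse (w.drop i)).map g
        = (shufflesHeadLeft (w.take i).reverse (w.drop i)).map g
          + (shufflesHeadRight (w.take i).reverse (w.drop i)).map g := by
    intro i hi
    refine shuffles_eq_headLeft_add_headRight ?_ ▸ Multiset.map_add _ _ _
    by_cases hi' : i < w.length
    · exact Or.inr (by simpa using hi')
    · exact Or.inl (by simpa [List.take_of_length_le (not_lt.1 hi')] using hw)
  rw [Finset.sum_congr rfl fun i hi => by rw [hsplit i hi, Multiset.sum_add]]
  refine sum_range_succ_neg_one_pow_smul_add_eq_zero _ _ ?_ ?_ fun i hi => ?_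
  · simp [shufflesHeadLeft]
  · simp [shufflesHeadRight]
  · rw [List.take_add_one, List.getElem?_eq_getElem hi, Option.toList_some,
      List.reverse_append, List.drop_eq_getElem_cons hi]
    exact congrArg (fun s => (s.map g).sum) (shufflesHeadLeft_cons _ _ _)

theorem antipode_descComp {K H : Type*} [CommSemiring K] [Ring H] [HopfAlgebra K H]
    (F : List ℕ → H) (hone : F [] = 1)
    (hmul : ∀ v w : List ℕ, v.Nodup → w.Nodup → (∀ x ∈ v, ∀ y ∈ w, x ≠ y) →
      F (descComp v) * F (descComp w) = ((shuffles v w).map (fun u => F (descComp u))).sum)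
    (hcomul : ∀ u : List ℕ, Coalgebra.comul (R := K) (F (descComp u)) =
      ∑ i ∈ Finset.range (u.length + 1), F (descComp (u.take i)) ⊗ₜ[K] F (descComp (u.drop i)))
    (hcounit : ∀ u : List ℕ, u ≠ [] → Coalgebra.counit (R := K) (F (descComp u)) = 0)
    {u : List ℕ} (hu : u.Nodup) :
    HopfAlgebra.antipode K (F (descComp u)) = (-1 : ℤ) ^ u.length • F (descComp u.reverse) := by
  induction hn : u.length using Nat.strong_induction_on generalizing u with
  | _ n ih =>
  subst hn
  rcases eq_or_ne u [] with rfl | hne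
  · simp [descComp, hone]
  set term : ℕ → H := fun i =>
    (-1 : ℤ) ^ i • (F (descComp (u.take i).reverse) * F (descComp (u.drop i)))
  have hterms : ∑ i ∈ Finset.range (u.length + 1), term i = 0 := by
    rw [← sum_range_neg_one_pow_smul_shuffles_reverse_take_drop_eq_zero
      (fun v => F (descComp v)) hne]
    refine Finset.sum_congr rfl fun i _ => congrArg _ (hmul _ _ ?_ ?_ ?_)
    · exact List.nodup_reverse.2 (hu.sublist (List.take_sublist i u))
    · exact hu.sublist (List.drop_sublist i u)
    · rintro x hx y hy rfl
      exact List.disjoint_of_nodup_append (by rwa [List.take_append_drop])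
        (List.mem_reverse.1 hx) hy
  have hantipode :
      ∑ i ∈ Finset.range u.length, term i + HopfAlgebra.antipode K (F (descComp u)) = 0 := by
    have := HopfAlgebra.sum_antipode_mul_eq_algebraMap_counit
      ⟨Finset.range (u.length + 1), _, _, (hcomul u).symm⟩
    rw [hcounit u hne, map_zero, Finset.sum_range_succ] at this
    simp only [List.take_length, List.drop_length, descComp, hone, mul_one] at this
    rwa [Finset.sum_congr rfl fun i hi => ?_] at this
    have hi : i < u.length := Finset.mem_range.1 hi
    rw [ih i (by simpa using hi) (hu.sublist (List.take_sublist i u)) (by simp; omega),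
      smul_mul_assoc]
  rw [Finset.sum_range_succ] at hterms
  simpa [term, descComp, hone] using add_left_cancel (hantipode.trans hterms.symm)

/-- In the Hopf algebra `QSym`, the antipode acts on the
fundamental basis by `S(F_α) = (-1)^{|α|} F_{α^t}`, where `α^t` is the
conjugate of `α`.  `QSym` in the fundamental basis is formalized as a Hopf
algebra `H` over a field `K` with a basis-indexing map `Fb` on compositions
satisfying: products are given by shuffles of modeling words (words of
distinct letters with prescribed descent compositions), the coproduct is given
by splitting the ribbon diagram at each of its `|α| + 1` cut positions, and
the counit rule. -/
theorem qsym_fundamental_antipode (K : Type) [Field K] (H : Type) [CommRing H]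
    [HopfAlgebra K H] (Fb : List ℕ → H)
    (hone : Fb [] = 1)
    (hmul : ∀ v w : List ℕ, v.Nodup → w.Nodup → (∀ x ∈ v, ∀ y ∈ w, x ≠ y) →
      Fb (descComp v) * Fb (descComp w) =
        ((shuffles v w).map (fun u => Fb (descComp u))).sum)
    (hcomul : ∀ α : List ℕ, (∀ i ∈ α, 0 < i) →
      Coalgebra.comul (R := K) (Fb α) =
        ∑ i ∈ Finset.range (α.sum + 1),
          Fb (splitComp α i).1 ⊗ₜ[K] Fb (splitComp α i).2)
    (hcounit : ∀ α : List ℕ, (∀ i ∈ α, 0 < i) →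
      Coalgebra.counit (R := K) (Fb α) = if α = [] then (1 : K) else 0)
    (α : List ℕ) (hα : ∀ i ∈ α, 0 < i) :
    HopfAlgebra.antipode (R := K) (Fb α) = ((-1 : ℤ) ^ α.sum) • Fb (conj α) := by
  have hcomul' : ∀ u : List ℕ, Coalgebra.comul (R := K) (Fb (descComp u)) =
      ∑ i ∈ Finset.range (u.length + 1),
        Fb (descComp (u.take i)) ⊗ₜ[K] Fb (descComp (u.drop i)) := by
    intro u
    simp only [hcomul _ (pos_of_mem_descComp u), sum_descComp, splitComp_descComp]
  have hcounit' : ∀ u : List ℕ, u ≠ [] → Coalgebra.counit (R := K) (Fb (descComp u)) = 0 :=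
    fun u hu => by rw [hcounit _ (pos_of_mem_descComp u), if_neg (descComp_ne_nil hu)]
  have hw := descComp_modelWord hα
  calc HopfAlgebra.antipode K (Fb α)
      = HopfAlgebra.antipode K (Fb (descComp (modelWord α))) := by rw [hw]
    _ = (-1 : ℤ) ^ (modelWord α).length • Fb (descComp (modelWord α).reverse) :=
        antipode_descComp Fb hone hmul hcomul' hcounit' (nodup_modelWord α)
    _ = ((-1 : ℤ) ^ α.sum) • Fb (conj α) := by
        rw [← conj_descComp (nodup_modelWord α), hw, ← sum_descComp, hw]
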